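/- Let U, V, W : (−1, 1) → ℝ be differentiable, and for x ∈ (−1, 1) let λ̄(x) be the symmetric 2×2 matrix with entries λ̄₁₁ = e^{2U+V}(1 − x)cosh W, λ̄₂₂ = e^{2U−V}(1 + x)cosh W, λ̄₁₂ = λ̄₂₁ = e^{2U}·√(1 − x²)·sinh W. Then for every x ∈ (−1, 1): (1 − x²)·[ ((det λ̄)′)²/(8(det λ̄)²) + (1/8)·Tr((λ̄⁻¹λ̄′)²) ] − 1/(1 − x²) = ((1 − x²)/4)·[ 12(U′)² + (V′)² + (W′)² + sinh²W·(V′ − 1/(1 − x²))² ] − (1/2)V′ − 3xU′ − 3/4, where ′ denotes d/dx. -/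

import Mathlib

/-
Put `N = λ̄⁻¹ λ̄′`. Jacobi's formula gives `(det λ̄)′ = det λ̄ · tr N`, and for `2 × 2` matrices
`tr (N²) = (tr N)² - 2 det N`, so the bracket on the left is `((tr N)² - det N) / 4`.
Factor `λ̄ = e^{2U} μ`, where `μ` no longer involves `U` and `det μ = 1 - x²`. Then
`N = 2U′ + μ⁻¹ μ′`, with `tr (μ⁻¹ μ′) = -2x / (1 - x²)` by Jacobi's formula applied to `μ` and
`det (μ⁻¹ μ′) = det μ′ / (1 - x²)`. The only explicit computation left is `det μ′`, where
`cosh² - sinh² = 1` makes the `W`-dependence collapse to `(W′)² + sinh² W · (V′ - 1/(1 - x²))²`.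
-/

open Real

/-- The fiber metric `λ̄` of Section 6 (sphere/lens parameterization), as a
matrix-valued function of `x` determined by target functions `U, V, W`. -/
noncomputable def lamSphere (U V W : ℝ → ℝ) (x : ℝ) : Matrix (Fin 2) (Fin 2) ℝ :=
  !![Real.exp (2 * U x + V x) * (1 - x) * Real.cosh (W x),
     Real.exp (2 * U x) * Real.sqrt (1 - x ^ 2) * Real.sinh (W x);
     Real.exp (2 * U x) * Real.sqrt (1 - x ^ 2) * Real.sinh (W x),
     Real.exp (2 * U x - V x) * (1 + x) * Real.cosh (W x)]

/-- The entrywise derivative `λ̄′` of the fiber metric. -/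
noncomputable def lamSphere' (U V W : ℝ → ℝ) (x : ℝ) : Matrix (Fin 2) (Fin 2) ℝ :=
  Matrix.of fun i j => deriv (fun t => lamSphere U V W t i j) x

open Matrix

namespace Matrix

section CommRing

variable {R : Type*} [CommRing R]

theorem trace_sq_fin_two (M : Matrix (Fin 2) (Fin 2) R) :
    trace (M ^ 2) = trace M ^ 2 - 2 * det M := by
  simp only [sq, trace_fin_two, det_fin_two, mul_apply, Fin.sum_univ_two]
  ring

theorem det_smul_one_add_fin_two (a : R) (M : Matrix (Fin 2) (Fin 2) R) :
    det (a • 1 + M) = a ^ 2 + a * trace M + det M := by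
  simp only [det_fin_two, trace_fin_two, add_apply, smul_apply, smul_eq_mul, one_apply_eq,
    one_apply_ne zero_ne_one, one_apply_ne one_ne_zero]
  ring

end CommRing

section Field

variable {K n : Type*} [Field K] [Fintype n] [DecidableEq n]

theorem trace_adjugate_mul_of_det_ne_zero {A : Matrix n n K} (hA : A.det ≠ 0) (B : Matrix n n K) :
    trace (adjugate A * B) = det A * trace (A⁻¹ * B) := by
  rw [inv_def, Ring.inverse_eq_inv', smul_mul, trace_smul, smul_eq_mul, ← mul_assoc,
    mul_inv_cancel₀ hA, one_mul]

theorem inv_smul_mul_smul_add_smul {c : K} (hc : c ≠ 0) (c' : K) {A : Matrix n n K}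
    (hA : A.det ≠ 0) (B : Matrix n n K) :
    (c • A)⁻¹ * (c' • A + c • B) = (c' / c) • 1 + A⁻¹ * B := by
  have hinv : (c • A)⁻¹ = c⁻¹ • A⁻¹ := inv_eq_left_inv <| by
    rw [smul_mul_smul_comm, inv_mul_cancel₀ hc, one_smul, nonsing_inv_mul A hA.isUnit]
  rw [hinv, Matrix.mul_add, Matrix.smul_mul, Matrix.smul_mul,
    Matrix.mul_smul, Matrix.mul_smul, nonsing_inv_mul A hA.isUnit, smul_smul, smul_smul,
    inv_mul_cancel₀ hc, one_smul, div_eq_inv_mul]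

end Field

end Matrix

def HasEntrywiseDerivAt {m n : Type*} (L : ℝ → Matrix m n ℝ) (L' : Matrix m n ℝ) (x : ℝ) :
    Prop :=
  ∀ i j, HasDerivAt (fun t => L t i j) (L' i j) x

namespace HasEntrywiseDerivAt

variable {m n : Type*} {L : ℝ → Matrix m n ℝ} {L' : Matrix m n ℝ} {x : ℝ}

theorem smul {f : ℝ → ℝ} {f' : ℝ} (hf : HasDerivAt f f' x) (hL : HasEntrywiseDerivAt L L' x) :
    HasEntrywiseDerivAt (fun t => f t • L t) (f' • L x + f x • L') x := fun i j => by
  refine (hf.mul (hL i j)).congr_deriv ?_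
  simp only [Matrix.add_apply, Matrix.smul_apply, smul_eq_mul, mul_comm]

theorem hasDerivAt_det {L : ℝ → Matrix (Fin 2) (Fin 2) ℝ} {L' : Matrix (Fin 2) (Fin 2) ℝ}
    (hL : HasEntrywiseDerivAt L L' x) :
    HasDerivAt (fun t => (L t).det) (trace (adjugate (L x) * L')) x := by
  have hdet : (fun t => (L t).det) = fun t => L t 0 0 * L t 1 1 - L t 0 1 * L t 1 0 :=
    funext fun t => det_fin_two (L t)
  rw [hdet]
  refine (((hL 0 0).mul (hL 1 1)).sub ((hL 0 1).mul (hL 1 0))).congr_deriv ?_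
  simp only [adjugate_fin_two, trace_fin_two, cons_mul, empty_mul, Equiv.symm_apply_apply,
    vecMul, dotProduct, Fin.sum_univ_two, of_apply, cons_val', cons_val_zero, cons_val_one,
    cons_val_fin_one]
  ring

theorem deriv_det {L : ℝ → Matrix (Fin 2) (Fin 2) ℝ} {L' : Matrix (Fin 2) (Fin 2) ℝ}
    (hL : HasEntrywiseDerivAt L L' x) (hdet : (L x).det ≠ 0) :
    deriv (fun t => (L t).det) x = (L x).det * trace ((L x)⁻¹ * L') := by
  rw [hL.hasDerivAt_det.deriv, trace_adjugate_mul_of_det_ne_zero hdet]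

end HasEntrywiseDerivAt

noncomputable def lamSphereShape (V W : ℝ → ℝ) (x : ℝ) : Matrix (Fin 2) (Fin 2) ℝ :=
  !![exp (V x) * (1 - x) * cosh (W x), sqrt (1 - x ^ 2) * sinh (W x);
     sqrt (1 - x ^ 2) * sinh (W x), exp (-V x) * (1 + x) * cosh (W x)]

noncomputable def lamSphereShape' (V W : ℝ → ℝ) (x : ℝ) : Matrix (Fin 2) (Fin 2) ℝ :=
  !![exp (V x) * (((1 - x) * deriv V x - 1) * cosh (W x) + (1 - x) * deriv W x * sinh (W x)),
     sqrt (1 - x ^ 2) * deriv W x * cosh (W x) - x / sqrt (1 - x ^ 2) * sinh (W x);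
     sqrt (1 - x ^ 2) * deriv W x * cosh (W x) - x / sqrt (1 - x ^ 2) * sinh (W x),
     exp (-V x) * ((1 - (1 + x) * deriv V x) * cosh (W x) + (1 + x) * deriv W x * sinh (W x))]

theorem det_lamSphereShape (V W : ℝ → ℝ) {x : ℝ} (hx : x ^ 2 ≤ 1) :
    (lamSphereShape V W x).det = 1 - x ^ 2 := by
  have hexp : exp (V x) * exp (-V x) = 1 := by rw [← exp_add, add_neg_cancel, exp_zero]
  have hr : sqrt (1 - x ^ 2) ^ 2 = 1 - x ^ 2 := sq_sqrt (sub_nonneg.2 hx)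
  rw [lamSphereShape, det_fin_two_of]
  linear_combination (1 - x ^ 2) * cosh (W x) ^ 2 * hexp - sinh (W x) ^ 2 * hr +
    (1 - x ^ 2) * cosh_sq (W x)

theorem hasEntrywiseDerivAt_lamSphereShape {V W : ℝ → ℝ} {x : ℝ} (hV : DifferentiableAt ℝ V x)
    (hW : DifferentiableAt ℝ W x) (hx : x ^ 2 < 1) :
    HasEntrywiseDerivAt (lamSphereShape V W) (lamSphereShape' V W x) x := by
  have hr : HasDerivAt (fun t => sqrt (1 - t ^ 2)) (-(2 * x) / (2 * sqrt (1 - x ^ 2))) x :=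
    (((hasDerivAt_pow 2 x).const_sub 1).sqrt (sub_ne_zero.2 hx.ne')).congr_deriv (by norm_num)
  have h00 : HasDerivAt (fun t => exp (V t) * (1 - t) * cosh (W t))
      (lamSphereShape' V W x 0 0) x := by
    refine ((hV.hasDerivAt.exp.mul ((hasDerivAt_id' x).const_sub 1)).mul
      hW.hasDerivAt.cosh).congr_deriv ?_
    simp only [lamSphereShape', of_apply, cons_val', cons_val_zero, cons_val_fin_one, Pi.mul_apply]
    ring
  have h01 : HasDerivAt (fun t => sqrt (1 - t ^ 2) * sinh (W t))
      (lamSphereShape' V W x 0 1) x := by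
    refine (hr.mul hW.hasDerivAt.sinh).congr_deriv ?_
    simp only [lamSphereShape', of_apply, cons_val', cons_val_zero, cons_val_one, cons_val_fin_one]
    field_simp
    ring
  have h11 : HasDerivAt (fun t => exp (-V t) * (1 + t) * cosh (W t))
      (lamSphereShape' V W x 1 1) x := by
    refine ((hV.hasDerivAt.neg.exp.mul ((hasDerivAt_id' x).const_add 1)).mul
      hW.hasDerivAt.cosh).congr_deriv ?_
    simp only [lamSphereShape', of_apply, cons_val', cons_val_one, cons_val_fin_one, Pi.mul_apply,
      Pi.neg_apply]
    ring
  intro i j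
  fin_cases i <;> fin_cases j
  exacts [h00, h01, h01, h11]

theorem det_lamSphereShape' (V W : ℝ → ℝ) {x : ℝ} (hx : x ^ 2 < 1) :
    (lamSphereShape' V W x).det = 2 * deriv V x - 1 - (1 - x ^ 2) * (deriv V x ^ 2 +
      deriv W x ^ 2 + sinh (W x) ^ 2 * (deriv V x - 1 / (1 - x ^ 2)) ^ 2) := by
  set q := deriv V x
  set w := deriv W x
  set r := sqrt (1 - x ^ 2)
  set c := cosh (W x)
  set s := sinh (W x)
  have hy : 1 - x ^ 2 ≠ 0 := sub_ne_zero.2 hx.ne'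
  have hexp : exp (V x) * exp (-V x) = 1 := by rw [← exp_add, add_neg_cancel, exp_zero]
  have hr : r ^ 2 = 1 - x ^ 2 := sq_sqrt (by linarith)
  have hr' : r⁻¹ ^ 2 = (1 - x ^ 2)⁻¹ := by rw [inv_pow, hr]
  have hyy : (1 - x ^ 2) * (1 - x ^ 2)⁻¹ = 1 := mul_inv_cancel₀ hy
  have hrr : r * r⁻¹ = 1 := mul_inv_cancel₀ (sqrt_pos.2 (by linarith)).ne'
  rw [lamSphereShape', det_fin_two_of]
  linear_combination
    (((1 - x) * q - 1) * c + (1 - x) * w * s) * ((1 - (1 + x) * q) * c + (1 + x) * w * s) * hexp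
    - w ^ 2 * c ^ 2 * hr - x ^ 2 * s ^ 2 * hr' + 2 * x * w * c * s * hrr
    + ((2 * q - (1 - x ^ 2) * q ^ 2 - 1) - (1 - x ^ 2) * w ^ 2) * cosh_sq (W x)
    + s ^ 2 * (1 - 2 * q + (1 - x ^ 2)⁻¹) * hyy

theorem trace_inv_lamSphereShape_mul {V W : ℝ → ℝ} {x : ℝ} (hV : DifferentiableAt ℝ V x)
    (hW : DifferentiableAt ℝ W x) (hx : x ^ 2 < 1) :
    trace ((lamSphereShape V W x)⁻¹ * lamSphereShape' V W x) = -(2 * x) / (1 - x ^ 2) := by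
  have hy : 1 - x ^ 2 ≠ 0 := sub_ne_zero.2 hx.ne'
  have hdet : (fun t => (lamSphereShape V W t).det) =ᶠ[nhds x] fun t => 1 - t ^ 2 := by
    filter_upwards [(isOpen_lt (continuous_pow 2) continuous_const).mem_nhds hx] with t ht
    exact det_lamSphereShape V W (le_of_lt ht)
  have hjac := ((hasEntrywiseDerivAt_lamSphereShape hV hW hx).hasDerivAt_det).unique
    ((((hasDerivAt_pow 2 x).const_sub 1).congr_of_eventuallyEq hdet))
  rw [trace_adjugate_mul_of_det_ne_zero (by rwa [det_lamSphereShape V W hx.le]),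
    det_lamSphereShape V W hx.le] at hjac
  field_simp
  linear_combination hjac

section lamSphere

theorem lamSphere_eq_smul (U V W : ℝ → ℝ) (x : ℝ) :
    lamSphere U V W x = exp (2 * U x) • lamSphereShape V W x := by
  ext i j
  fin_cases i <;> fin_cases j <;>
    simp only [lamSphere, lamSphereShape, exp_add, exp_sub, exp_neg, div_eq_mul_inv, of_apply,
      cons_val', cons_val_zero, cons_val_one, cons_val_fin_one, Fin.zero_eta, Fin.mk_one,
      Matrix.smul_apply, smul_eq_mul] <;>
      ring

variable {U V W : ℝ → ℝ} {x : ℝ}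

theorem lamSphere'_eq_of_hasEntrywiseDerivAt {L' : Matrix (Fin 2) (Fin 2) ℝ}
    (h : HasEntrywiseDerivAt (lamSphere U V W) L' x) :
    lamSphere' U V W x = L' :=
  Matrix.ext fun i j => (h i j).deriv

theorem det_lamSphere (hx : x ^ 2 < 1) :
    (lamSphere U V W x).det = exp (2 * U x) ^ 2 * (1 - x ^ 2) := by
  rw [lamSphere_eq_smul, det_smul, Fintype.card_fin, det_lamSphereShape V W hx.le]

theorem hasEntrywiseDerivAt_lamSphere (hU : DifferentiableAt ℝ U x)
    (hV : DifferentiableAt ℝ V x) (hW : DifferentiableAt ℝ W x) (hx : x ^ 2 < 1) :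
    HasEntrywiseDerivAt (lamSphere U V W) ((exp (2 * U x) * (2 * deriv U x)) •
      lamSphereShape V W x + exp (2 * U x) • lamSphereShape' V W x) x := by
  rw [funext (lamSphere_eq_smul U V W)]
  exact HasEntrywiseDerivAt.smul (hU.hasDerivAt.const_mul 2).exp
    (hasEntrywiseDerivAt_lamSphereShape hV hW hx)

theorem inv_lamSphere_mul_lamSphere' (hU : DifferentiableAt ℝ U x)
    (hV : DifferentiableAt ℝ V x) (hW : DifferentiableAt ℝ W x) (hx : x ^ 2 < 1) :
    (lamSphere U V W x)⁻¹ * lamSphere' U V W x =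
      (2 * deriv U x) • 1 + (lamSphereShape V W x)⁻¹ * lamSphereShape' V W x := by
  have hμ : (lamSphereShape V W x).det ≠ 0 := by
    rw [det_lamSphereShape V W hx.le]
    exact sub_ne_zero.2 hx.ne'
  rw [lamSphere'_eq_of_hasEntrywiseDerivAt (hasEntrywiseDerivAt_lamSphere hU hV hW hx),
    lamSphere_eq_smul, inv_smul_mul_smul_add_smul (exp_ne_zero _) _ hμ,
    mul_div_cancel_left₀ _ (exp_ne_zero _)]

end lamSphere

/-- The kinetic-term identity of Section 6 for sphere/lens topology, rewriting the λ-part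
of the area functional in terms of the target variables `(U, V, W)`. -/
theorem stmt14 (U V W : ℝ → ℝ)
    (hU : ∀ x ∈ Set.Ioo (-1 : ℝ) 1, DifferentiableAt ℝ U x)
    (hV : ∀ x ∈ Set.Ioo (-1 : ℝ) 1, DifferentiableAt ℝ V x)
    (hW : ∀ x ∈ Set.Ioo (-1 : ℝ) 1, DifferentiableAt ℝ W x) :
    ∀ x ∈ Set.Ioo (-1 : ℝ) 1,
      (1 - x ^ 2) *
          ((deriv (fun t => (lamSphere U V W t).det) x) ^ 2 /
              (8 * ((lamSphere U V W x).det) ^ 2) +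
            1 / 8 * Matrix.trace (((lamSphere U V W x)⁻¹ * lamSphere' U V W x) ^ 2)) -
          1 / (1 - x ^ 2)
        = (1 - x ^ 2) / 4 *
            (12 * (deriv U x) ^ 2 + (deriv V x) ^ 2 + (deriv W x) ^ 2 +
              Real.sinh (W x) ^ 2 * (deriv V x - 1 / (1 - x ^ 2)) ^ 2) -
          1 / 2 * deriv V x - 3 * x * deriv U x - 3 / 4 := by
  rintro x hx
  have hx2 : x ^ 2 < 1 := by nlinarith [hx.1, hx.2]
  have hy : 1 - x ^ 2 ≠ 0 := sub_ne_zero.2 hx2.ne'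
  have hlam := hasEntrywiseDerivAt_lamSphere (hU x hx) (hV x hx) (hW x hx) hx2
  have hdet : (lamSphere U V W x).det ≠ 0 := by
    rw [det_lamSphere hx2]
    exact mul_ne_zero (by positivity) hy
  rw [hlam.deriv_det hdet, ← lamSphere'_eq_of_hasEntrywiseDerivAt hlam, trace_sq_fin_two,
    inv_lamSphere_mul_lamSphere' (hU x hx) (hV x hx) (hW x hx) hx2, det_smul_one_add_fin_two,
    trace_add, trace_smul, trace_one, Fintype.card_fin, Nat.cast_ofNat,
    trace_inv_lamSphereShape_mul (hV x hx) (hW x hx) hx2, det_mul, det_nonsing_inv,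
    Ring.inverse_eq_inv', det_lamSphereShape V W hx2.le, det_lamSphereShape' V W hx2]
  field_simp
  ring
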